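/- arXiv:2104.08868 — 2 statements merged into one kernel-verified Lean document; each statement's English description precedes it below -/
import Mathlib

section
/- Let K be a compact convex set in ℝ^n with nonempty interior, and suppose K is the convex hull of compact convex sets K₁,...,K_p with p > n+1. For positive integers m₁,...,m_p, the covering functional satisfies Γ_{m₁+⋯+m_p}(K) ≤ max_{i∈[p]} (n+Γ_{m_i}(K_i))/(n+1). -/
/-!
By Carathéodory, a point of `K = conv(K₁ ∪ ⋯ ∪ K_p)` is a convex combination of at most `n + 1`
points of the `Kᵢ`, so one of them, `z ∈ Kᵢ`, carries weight at least `1/(n+1)`: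
`x = z/(n+1) + n/(n+1) · v` with `v ∈ K`. If `z ∈ xᵢⱼ + γᵢ Kᵢ`, then `x` lies in
`xᵢⱼ/(n+1) + (γᵢ/(n+1)) K + (n/(n+1)) K`, which by convexity of `K` is a translate of
`((n + γᵢ)/(n+1)) K`. So the `m₁ + ⋯ + m_p` points `xᵢⱼ/(n+1)`, suitably shifted, cover `K`
by translates of `t K` for any `t` above the maximum of `(n + γᵢ)/(n+1)`.
-/

open Set Pointwise

/-- The covering functional: the smallest `γ ≥ 0` such that `K` can be
covered by `m` translates of `γ • K`. -/
noncomputable def coveringFunctional {n : ℕ} (K : Set (EuclideanSpace ℝ (Fin n))) (m : ℕ) : ℝ :=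
  sInf {γ : ℝ | 0 ≤ γ ∧ ∃ x : Fin m → EuclideanSpace ℝ (Fin n),
    K ⊆ ⋃ i, x i +ᵥ γ • K}

open Module

section ConvexHull

variable {E : Type*} [AddCommGroup E] [Module ℝ E]

theorem exists_eq_inv_smul_add_smul_of_mem_convexHull [FiniteDimensional ℝ E] {n : ℕ}
    (hn : finrank ℝ E ≤ n) {s : Set E} {x : E} (hx : x ∈ convexHull ℝ s) :
    ∃ z ∈ s, ∃ v ∈ convexHull ℝ s, x = ((n : ℝ) + 1)⁻¹ • z + ((n : ℝ) / (n + 1)) • v := by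
  classical
  obtain ⟨ι, _, z, w, hzs, hind, hw, hw1, rfl⟩ := eq_pos_convex_span_of_mem_convexHull hx
  have hzs' : ∀ j, z j ∈ s := fun j => hzs (mem_range_self j)
  have hcard : Fintype.card ι ≤ n + 1 := hind.card_le_finrank_succ.trans <| by
    have := Submodule.finrank_le (vectorSpan ℝ (range z)); omega
  obtain ⟨k, -, hk⟩ : ∃ k ∈ Finset.univ, ((n : ℝ) + 1)⁻¹ ≤ w k := by
    refine Finset.exists_le_of_sum_le (Finset.nonempty_of_sum_ne_zero (f := w) (by simp [hw1])) ?_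
    rw [Finset.sum_const, Finset.card_univ, nsmul_eq_mul, hw1, ← div_eq_mul_inv,
      div_le_one (by positivity)]
    exact_mod_cast hcard
  rcases n.eq_zero_or_pos with rfl | hn0
  · have : Subsingleton E := finrank_zero_iff.1 (Nat.le_zero.1 hn)
    exact ⟨z k, hzs' k, z k, subset_convexHull ℝ s (hzs' k), Subsingleton.elim _ _⟩
  set σ : ℝ := ((n : ℝ) + 1)⁻¹
  set w' : ι → ℝ := fun j => w j - if j = k then σ else 0 with hw'
  have hw'sum : ∑ j, w' j = n / (n + 1) := by
    simp only [hw', Finset.sum_sub_distrib, Finset.sum_ite_eq', Finset.mem_univ, if_pos, hw1, σ]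
    field_simp
    ring
  have hw'smul : ∑ j, w' j • z j = ∑ j, w j • z j - σ • z k := by
    simp only [hw', sub_smul, ite_smul, zero_smul, Finset.sum_sub_distrib, Finset.sum_ite_eq',
      Finset.mem_univ, if_pos]
  have hw'pos : 0 < ∑ j, w' j := hw'sum ▸ by positivity
  refine ⟨z k, hzs' k, Finset.univ.centerMass w' z, Finset.univ.centerMass_mem_convexHull
    (fun j _ => sub_nonneg.2 ?_) hw'pos fun j _ => hzs' j, ?_⟩
  · split_ifs with hj
    · exact hj ▸ hk
    · exact (hw j).le
  · rw [Finset.centerMass, ← hw'sum, smul_inv_smul₀ hw'pos.ne', hw'smul]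
    abel

theorem Convex.smul_add_smul_add_smul_mem {C : Set E} (hC : Convex ℝ C) {a b c : ℝ}
    (ha : 0 ≤ a) (hb : 0 ≤ b) (hc : 0 ≤ c) {u v w : E} (hu : u ∈ C) (hv : v ∈ C) (hw : w ∈ C) :
    a • u + b • v + c • w ∈ (a + b + c) • C := by
  rw [hC.add_smul (add_nonneg ha hb) hc, hC.add_smul ha hb]
  exact add_mem_add (add_mem_add (smul_mem_smul_set hu) (smul_mem_smul_set hv))
    (smul_mem_smul_set hw)

theorem convexHull_iUnion_subset_iUnion_vadd_smul [FiniteDimensional ℝ E] {n : ℕ}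
    (hn : finrank ℝ E ≤ n) {ι : Type*} {κ : ι → Type*} (K : ι → Set E) (x : ∀ i, κ i → E)
    {γ : ι → ℝ} (hγ : ∀ i, 0 ≤ γ i) (hcover : ∀ i, K i ⊆ ⋃ j, x i j +ᵥ γ i • K i) {t : ℝ}
    (ht : ∀ i, ((n : ℝ) + γ i) / (n + 1) ≤ t) :
    ∃ c : (Σ i, κ i) → E, convexHull ℝ (⋃ i, K i) ⊆ ⋃ q, c q +ᵥ t • convexHull ℝ (⋃ i, K i) := by
  set C := convexHull ℝ (⋃ i, K i)
  rcases C.eq_empty_or_nonempty with hC | ⟨y₀, hy₀⟩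
  · exact ⟨0, hC ▸ empty_subset _⟩
  have hKC : ∀ i, K i ⊆ C := fun i => (subset_iUnion K i).trans (subset_convexHull ℝ _)
  -- The slack `t - (n + γ i)/(n + 1)` is absorbed by a fixed point `y₀` of `C`.
  refine ⟨fun q => ((n : ℝ) + 1)⁻¹ • x q.1 q.2 - (t - ((n : ℝ) + γ q.1) / (n + 1)) • y₀,
    fun y hy => ?_⟩
  obtain ⟨z, hz, v, hv, rfl⟩ := exists_eq_inv_smul_add_smul_of_mem_convexHull hn hy
  obtain ⟨i, hzi⟩ := mem_iUnion.1 hz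
  obtain ⟨j, hzj⟩ := mem_iUnion.1 (hcover i hzi)
  obtain ⟨w, hw, rfl⟩ : ∃ w ∈ K i, x i j + γ i • w = z := by
    simpa [mem_vadd_set, mem_smul_set] using hzj
  refine mem_iUnion.2 ⟨⟨i, j⟩, mem_vadd_set_iff_neg_vadd_mem.2 ?_⟩
  have key := (convex_convexHull ℝ _).smul_add_smul_add_smul_mem (b := (n : ℝ) / (n + 1))
    (mul_nonneg (inv_nonneg.2 n.cast_add_one_pos.le) (hγ i)) (by positivity)
    (sub_nonneg.2 (ht i)) (hKC i hw) hv hy₀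
  have hsum : ((n : ℝ) + 1)⁻¹ * γ i + n / (n + 1) + (t - (n + γ i) / (n + 1)) = t := by
    field_simp; ring
  rw [hsum] at key
  convert key using 1
  rw [vadd_eq_add]
  module

end ConvexHull

section CoveringFunctional

variable {n : ℕ} {K : Set (EuclideanSpace ℝ (Fin n))} {m : ℕ}

theorem coveringFunctional_nonneg : 0 ≤ coveringFunctional K m :=
  Real.sInf_nonneg fun _ hγ => hγ.1

theorem coveringFunctional_le_of_subset_iUnion {ι : Type*} [Fintype ι] (hι : Fintype.card ι = m)
    {γ : ℝ} (hγ : 0 ≤ γ) (c : ι → EuclideanSpace ℝ (Fin n)) (hc : K ⊆ ⋃ q, c q +ᵥ γ • K) :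
    coveringFunctional K m ≤ γ := by
  let e : ι ≃ Fin m := Fintype.equivFinOfCardEq hι
  refine csInf_le ⟨0, fun _ hγ' => hγ'.1⟩ ⟨hγ, c ∘ e.symm, hc.trans ?_⟩
  exact iUnion_subset fun q => subset_iUnion_of_subset (e q) (by simp)

theorem exists_subset_iUnion_vadd_smul_of_coveringFunctional_lt (hm : 0 < m) {t : ℝ}
    (ht : coveringFunctional K m < t) :
    ∃ γ, 0 ≤ γ ∧ γ < t ∧ ∃ x : Fin m → EuclideanSpace ℝ (Fin n), K ⊆ ⋃ j, x j +ᵥ γ • K := by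
  have hone : (1 : ℝ) ∈ {γ : ℝ | 0 ≤ γ ∧ ∃ x : Fin m → EuclideanSpace ℝ (Fin n),
      K ⊆ ⋃ j, x j +ᵥ γ • K} :=
    ⟨zero_le_one, fun _ => 0, fun y hy => mem_iUnion.2 ⟨⟨0, hm⟩, by simpa using hy⟩⟩
  obtain ⟨γ, ⟨hγ, x, hx⟩, hγt⟩ := exists_lt_of_csInf_lt ⟨1, hone⟩ ht
  exact ⟨γ, hγ, hγt, x, hx⟩

end CoveringFunctional

theorem covering_functional_convexHull_le_of_gt_general {n p : ℕ}
    (K : Fin p → Set (EuclideanSpace ℝ (Fin n)))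
    (m : Fin p → ℕ) (hm : ∀ i, 0 < m i) :
    coveringFunctional (convexHull ℝ (⋃ i, K i)) (∑ i, m i) ≤
      ⨆ i, ((n : ℝ) + coveringFunctional (K i) (m i)) / (n + 1) := by
  refine le_of_forall_gt_imp_ge_of_dense fun t ht => ?_
  have hlt : ∀ i, coveringFunctional (K i) (m i) < (n + 1) * t - n := fun i => by
    have := (le_ciSup (finite_range _).bddAbove i).trans_lt ht
    rw [div_lt_iff₀ (by positivity)] at this
    linarith
  choose γ hγ hγt x hx using fun i =>
    exists_subset_iUnion_vadd_smul_of_coveringFunctional_lt (hm i) (hlt i)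
  obtain ⟨c, hc⟩ := convexHull_iUnion_subset_iUnion_vadd_smul finrank_euclideanSpace_fin.le
    K x hγ hx (t := t) fun i => by
      rw [div_le_iff₀ (by positivity)]
      linarith [hγt i]
  have ht0 : 0 ≤ t := (Real.iSup_nonneg fun i =>
    div_nonneg (add_nonneg n.cast_nonneg coveringFunctional_nonneg) (by positivity)).trans ht.le
  exact coveringFunctional_le_of_subset_iUnion (by simp) ht0 c hc

theorem covering_functional_convexHull_le_of_gt {n p : ℕ} (hpn : n + 1 < p)
    (K : Fin p → Set (EuclideanSpace ℝ (Fin n)))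
    (hKne : ∀ i, (K i).Nonempty) (hKc : ∀ i, IsCompact (K i)) (hKconv : ∀ i, Convex ℝ (K i))
    (hint : (interior (convexHull ℝ (⋃ i, K i))).Nonempty)
    (m : Fin p → ℕ) (hm : ∀ i, 0 < m i) :
    coveringFunctional (convexHull ℝ (⋃ i, K i)) (∑ i, m i) ≤
      ⨆ i, ((n : ℝ) + coveringFunctional (K i) (m i)) / (n + 1) :=
  covering_functional_convexHull_le_of_gt_general K m hm
end

section
/- If K ⊆ ℝ³ is a three-dimensional simplex (convex hull of 4 affinely independent points a, b, c, d), then writing K = conv(conv{a,b} ∪ conv{c,d}) yields Γ₄(K) ≤ 3/4. -/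
open Set Pointwise

/-! Every point of a simplex with `m` vertices has a barycentric coordinate `≥ 1/m`, so it lies in
the image of the simplex under the homothety of ratio `1 - 1/m` centred at the corresponding
vertex, and these `m` images are translates of `(1 - 1/m) • K`. -/

section Simplex

variable {ι E : Type*} [AddCommGroup E] [Module ℝ E]

theorem Finset.exists_inv_card_le_of_sum_eq_one [Fintype ι] {s : Finset ι} {w : ι → ℝ}
    (hw₁ : ∑ j ∈ s, w j = 1) : ∃ i ∈ s, 1 / Fintype.card ι ≤ w i := by
  have hs : s.Nonempty := Finset.nonempty_of_sum_ne_zero (hw₁ ▸ one_ne_zero)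
  refine Finset.exists_le_of_sum_le hs ?_
  have hcard : (s.card : ℝ) ≤ Fintype.card ι := by exact_mod_cast s.card_le_univ
  have hpos : (0 : ℝ) < Fintype.card ι := hcard.trans_lt' (by exact_mod_cast hs.card_pos)
  rw [Finset.sum_const, nsmul_eq_mul, hw₁, mul_one_div, div_le_one hpos]
  exact hcard

theorem Finset.sum_smul_mem_vadd_smul_convexHull {s : Finset ι} {w : ι → ℝ}
    (v : ι → E) (hw₀ : ∀ j ∈ s, 0 ≤ w j) (hw₁ : ∑ j ∈ s, w j = 1) {i : ι} (hi : i ∈ s)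
    {t : ℝ} (hti : t ≤ w i) (ht : t < 1) :
    ∑ j ∈ s, w j • v j ∈ t • v i +ᵥ (1 - t) • convexHull ℝ (Set.range v) := by
  classical
  set u := w - Pi.single i t
  have hu₀ : ∀ j ∈ s, 0 ≤ u j := by
    intro j hj
    rcases eq_or_ne j i with rfl | hji
    · simpa [u] using hti
    · simpa [u, hji] using hw₀ j hj
  have hu₁ : ∑ j ∈ s, u j = 1 - t := by
    simp [u, Finset.sum_sub_distrib, hw₁, Finset.sum_pi_single', hi]
  have hsum : ∑ j ∈ s, u j • v j = ∑ j ∈ s, w j • v j - t • v i := by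
    simp [u, sub_smul, Finset.sum_sub_distrib, Pi.single_apply, ite_smul, hi]
  have hq : s.centerMass u v ∈ convexHull ℝ (Set.range v) :=
    s.centerMass_mem_convexHull hu₀ (by linarith) fun j _ => mem_range_self j
  refine ⟨_, smul_mem_smul_set hq, show t • v i + _ = _ from ?_⟩
  rw [Finset.centerMass, smul_smul, hu₁, mul_inv_cancel₀ (sub_ne_zero.2 ht.ne'),
    one_smul, hsum, add_sub_cancel]

theorem convexHull_range_subset_iUnion_vadd_smul [Fintype ι] [Nontrivial ι] (v : ι → E) :
    convexHull ℝ (range v) ⊆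
      ⋃ i, (1 / Fintype.card ι : ℝ) • v i +ᵥ
        (1 - 1 / Fintype.card ι : ℝ) • convexHull ℝ (range v) := by
  intro p hp
  rw [convexHull_range_eq_exists_affineCombination] at hp
  obtain ⟨s, w, hw₀, hw₁, rfl⟩ := hp
  obtain ⟨i, hi, hwi⟩ := Finset.exists_inv_card_le_of_sum_eq_one hw₁
  have hlt : (1 / Fintype.card ι : ℝ) < 1 := by
    rw [div_lt_one (by positivity)]
    exact_mod_cast Fintype.one_lt_card
  rw [s.affineCombination_eq_linear_combination v w hw₁]
  exact mem_iUnion.2 ⟨i, s.sum_smul_mem_vadd_smul_convexHull v hw₀ hw₁ hi hwi hlt⟩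

end Simplex

theorem coveringFunctional_le {n m : ℕ} {K : Set (EuclideanSpace ℝ (Fin n))} {γ : ℝ}
    (hγ : 0 ≤ γ) (x : Fin m → EuclideanSpace ℝ (Fin n))
    (hK : K ⊆ ⋃ i, x i +ᵥ γ • K) :
    coveringFunctional K m ≤ γ :=
  csInf_le ⟨0, fun _ h => h.1⟩ ⟨hγ, x, hK⟩

theorem coveringFunctional_convexHull_range_le {n m : ℕ} (hm : 2 ≤ m)
    (v : Fin m → EuclideanSpace ℝ (Fin n)) :
    coveringFunctional (convexHull ℝ (range v)) m ≤ 1 - 1 / m := by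
  have : Nontrivial (Fin m) := Fin.nontrivial_iff_two_le.2 hm
  have hcover := convexHull_range_subset_iUnion_vadd_smul v
  rw [Fintype.card_fin] at hcover
  refine coveringFunctional_le (sub_nonneg.2 ?_) _ hcover
  exact div_le_one_of_le₀ (by exact_mod_cast one_le_two.trans hm) m.cast_nonneg

theorem covering_functional_four_simplex_general
    (a b c d : EuclideanSpace ℝ (Fin 3))
    (K : Set (EuclideanSpace ℝ (Fin 3)))
    (hK : K = convexHull ℝ {a, b, c, d}) :
    coveringFunctional K 4 ≤ 3 / 4 := by
  have hvertices : range ![a, b, c, d] = {a, b, c, d} := by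
    simp only [Matrix.range_cons, Matrix.range_empty, union_empty, singleton_union]
  rw [hK, ← hvertices]
  exact (coveringFunctional_convexHull_range_le (by norm_num) _).trans_eq (by norm_num)

theorem covering_functional_four_simplex
    (a b c d : EuclideanSpace ℝ (Fin 3))
    (hind : AffineIndependent ℝ ![a, b, c, d])
    (K : Set (EuclideanSpace ℝ (Fin 3)))
    (hK : K = convexHull ℝ {a, b, c, d}) :
    coveringFunctional K 4 ≤ 3 / 4 :=
  covering_functional_four_simplex_general a b c d K hK
end
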